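/- If a tree model (T, ω, (S_e), (C_v)) with full behavior 𝔅 is essential (i.e., 𝔅|_e = S_e for every edge e), then 𝔅|_v = C_v for every vertex v. -/

import Mathlib

open Module

variable {F : Type*} [Field F] {I V : Type*} [Fintype I] [Fintype V]

section TreeModel

variable (F) (G : SimpleGraph V) (ω : I → V)
  (S : G.edgeSet → Type*) [∀ e, AddCommGroup (S e)] [∀ e, Module F (S e)]

/-- The local configuration at a vertex `v` of a global configuration: the symbol
variables indexed by `ω⁻¹(v)` together with the state variables on edges incident
with `v`. -/
noncomputable def localizeL (v : V) :
    ((I → F) × ((e : G.edgeSet) → S e)) →ₗ[F]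
      ((↥(ω ⁻¹' {v}) → F) × ((e : {e : G.edgeSet // v ∈ (e : Sym2 V)}) → S e.val)) :=
  LinearMap.prod
    ((LinearMap.funLeft F F Subtype.val).comp (LinearMap.fst F _ _))
    ((LinearMap.pi (fun e => LinearMap.proj e.val)).comp (LinearMap.snd F _ _))

/-- The full behavior of a tree model: all global configurations whose local
configuration at every vertex `v` satisfies the local constraint `Cv v`. -/
noncomputable def fullBehavior
    (Cv : ∀ v : V, Submodule F
      ((↥(ω ⁻¹' {v}) → F) × ((e : {e : G.edgeSet // v ∈ (e : Sym2 V)}) → S e.val))) :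
    Submodule F ((I → F) × ((e : G.edgeSet) → S e)) :=
  ⨅ v : V, (Cv v).comap (localizeL F G ω S v)

/-- Projection of a global configuration onto the state variable at edge `e`. -/
noncomputable def projEdge (e : G.edgeSet) :
    ((I → F) × ((e : G.edgeSet) → S e)) →ₗ[F] S e :=
  (LinearMap.proj e).comp (LinearMap.snd F _ _)

end TreeModel


/-!
Given `c ∈ C_v`, essentiality provides for every edge `e` at `v` a global configuration
`b_e ∈ 𝔅` whose state on `e` is `c_e`. Deleting `v` splits the tree into one branch per edge
at `v`; the configuration that equals `c` around `v` and `b_e` on the branch behind `e` lies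
in `𝔅`, because every vertex `w ≠ v` sees only its own branch together with, possibly, the
edge to `v`, on which `b_e` and `c` agree.
-/

section

omit [Fintype I] [Fintype V]

namespace SimpleGraph

variable {G : SimpleGraph V}

lemma Walk.snd_concat {u v w : V} {p : G.Walk u v} (hp : ¬p.Nil) (h : G.Adj v w) :
    (p.concat h).snd = p.snd := by
  simp [Walk.concat_eq_append, Walk.getVert_append', hp]

namespace IsTree

noncomputable def firstStep (hT : G.IsTree) (v w : V) : V :=
  (hT.existsUnique_path v w).choose.snd

lemma firstStep_eq_snd (hT : G.IsTree) {v w : V} {p : G.Walk v w} (hp : p.IsPath) :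
    hT.firstStep v w = p.snd := by
  rw [firstStep, (hT.existsUnique_path v w).unique (hT.existsUnique_path v w).choose_spec.1 hp]

lemma adj_firstStep (hT : G.IsTree) {v w : V} (hw : w ≠ v) : G.Adj v (hT.firstStep v w) := by
  obtain ⟨p, hp, -⟩ := hT.existsUnique_path v w
  rw [hT.firstStep_eq_snd hp]
  exact Walk.adj_snd (Walk.not_nil_of_ne hw.symm)

lemma firstStep_of_adj (hT : G.IsTree) {v w : V} (h : G.Adj v w) : hT.firstStep v w = w :=
  hT.firstStep_eq_snd (p := Walk.cons h Walk.nil) (by simp [h.ne])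

lemma firstStep_eq_of_adj (hT : G.IsTree) {v w u : V} (hw : w ≠ v) (hu : u ≠ v)
    (h : G.Adj w u) : hT.firstStep v w = hT.firstStep v u := by
  classical
  obtain ⟨p, hp, -⟩ := hT.existsUnique_path v w
  rw [hT.firstStep_eq_snd hp]
  by_cases hup : u ∈ p.support
  · rw [hT.firstStep_eq_snd (hp.takeUntil hup), Walk.snd_takeUntil hu]
  · rw [hT.firstStep_eq_snd (hp.concat hup h), Walk.snd_concat (Walk.not_nil_of_ne hw.symm)]

noncomputable def firstEdge (hT : G.IsTree) {v w : V} (hw : w ≠ v) :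
    {e : G.edgeSet // v ∈ (e : Sym2 V)} :=
  ⟨⟨s(v, hT.firstStep v w), hT.adj_firstStep hw⟩, Sym2.mem_mk_left _ _⟩

lemma firstEdge_eq_of_mem (hT : G.IsTree) {v w : V} {f : G.edgeSet} (hv : v ∈ (f : Sym2 V))
    (hwf : w ∈ (f : Sym2 V)) (hw : w ≠ v) : hT.firstEdge hw = ⟨f, hv⟩ := by
  have hf : (f : Sym2 V) = s(v, w) := (Sym2.mem_and_mem_iff hw.symm).mp ⟨hv, hwf⟩
  have hvw : G.Adj v w := by simpa [hf] using f.2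
  refine Subtype.ext (Subtype.ext ?_)
  change s(v, hT.firstStep v w) = f
  rw [hf, hT.firstStep_of_adj hvw]

lemma firstEdge_eq_of_mem_edgeSet (hT : G.IsTree) {v a b : V} {f : Sym2 V}
    (hf : f ∈ G.edgeSet) (hv : v ∉ f) (ha : a ∈ f) (hb : b ∈ f) :
    hT.firstEdge (ne_of_mem_of_not_mem ha hv) = hT.firstEdge (ne_of_mem_of_not_mem hb hv) := by
  obtain rfl | hab := eq_or_ne a b
  · rfl
  rw [(Sym2.mem_and_mem_iff hab).mp ⟨ha, hb⟩, mem_edgeSet] at hf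
  simp only [firstEdge,
    hT.firstStep_eq_of_adj (ne_of_mem_of_not_mem ha hv) (ne_of_mem_of_not_mem hb hv) hf]

end IsTree

end SimpleGraph

section TreeModel

variable {G : SimpleGraph V} {ω : I → V} {S : G.edgeSet → Type*} [∀ e, AddCommGroup (S e)]
  [∀ e, Module F (S e)]
  {Cv : ∀ v : V, Submodule F
    ((↥(ω ⁻¹' {v}) → F) × ((e : {e : G.edgeSet // v ∈ (e : Sym2 V)}) → S e.val))}

lemma mem_fullBehavior_iff {x : (I → F) × ((e : G.edgeSet) → S e)} :
    x ∈ fullBehavior F G ω S Cv ↔ ∀ v, localizeL F G ω S v x ∈ Cv v := by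
  simp only [fullBehavior, Submodule.mem_iInf, Submodule.mem_comap]

lemma map_localizeL_fullBehavior_le (v : V) :
    (fullBehavior F G ω S Cv).map (localizeL F G ω S v) ≤ Cv v :=
  Submodule.map_le_iff_le_comap.mpr (iInf_le _ v)

@[simp]
lemma localizeL_apply_fst (v : V) (x : (I → F) × ((e : G.edgeSet) → S e))
    (i : ↥(ω ⁻¹' {v})) :
    (localizeL F G ω S v x).1 i = x.1 i :=
  rfl

@[simp]
lemma localizeL_apply_snd (v : V) (x : (I → F) × ((e : G.edgeSet) → S e))
    (e : {e : G.edgeSet // v ∈ (e : Sym2 V)}) :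
    (localizeL F G ω S v x).2 e = x.2 e :=
  rfl

lemma localizeL_eq_localizeL {v : V} {x y : (I → F) × ((e : G.edgeSet) → S e)}
    (hsym : ∀ i, ω i = v → x.1 i = y.1 i)
    (hstate : ∀ e : G.edgeSet, v ∈ (e : Sym2 V) → x.2 e = y.2 e) :
    localizeL F G ω S v x = localizeL F G ω S v y :=
  Prod.ext (funext fun i => hsym i i.2) (funext fun e => hstate e e.2)

variable (G ω S) in
open Classical in
/-- On an edge away from `v` the state is read off `y` at an arbitrary endpoint; in
`glueAt_mem_fullBehavior` the two endpoints agree there. -/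
noncomputable def glueAt (v : V)
    (c : (↥(ω ⁻¹' {v}) → F) × ((e : {e : G.edgeSet // v ∈ (e : Sym2 V)}) → S e.val))
    (y : V → (I → F) × ((e : G.edgeSet) → S e)) : (I → F) × ((e : G.edgeSet) → S e) :=
  (fun i => if h : ω i = v then c.1 ⟨i, h⟩ else (y (ω i)).1 i,
   fun f => if h : v ∈ (f : Sym2 V) then c.2 ⟨f, h⟩ else (y (f : Sym2 V).out.1).2 f)

variable {v : V}
  {c : (↥(ω ⁻¹' {v}) → F) × ((e : {e : G.edgeSet // v ∈ (e : Sym2 V)}) → S e.val)}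
  {y : V → (I → F) × ((e : G.edgeSet) → S e)}

lemma localizeL_glueAt_self : localizeL F G ω S v (glueAt G ω S v c y) = c :=
  Prod.ext (funext fun i => by simp [glueAt, show ω i = v from i.2])
    (funext fun e => by simp [glueAt, e.2])

lemma localizeL_glueAt_of_ne {w : V} (hw : w ≠ v)
    (hcy : ∀ (f : G.edgeSet) (hv : v ∈ (f : Sym2 V)), w ∈ (f : Sym2 V) →
      c.2 ⟨f, hv⟩ = (y w).2 f)
    (hy : ∀ f : G.edgeSet, v ∉ (f : Sym2 V) →
      ∀ a ∈ (f : Sym2 V), ∀ b ∈ (f : Sym2 V), (y a).2 f = (y b).2 f) :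
    localizeL F G ω S w (glueAt G ω S v c y) = localizeL F G ω S w (y w) := by
  refine localizeL_eq_localizeL (fun i hi => ?_) (fun f hwf => ?_)
  · simp [glueAt, hi, hw]
  · by_cases hv : v ∈ (f : Sym2 V)
    · simpa [glueAt, hv] using hcy f hv hwf
    · simpa [glueAt, hv] using hy f hv _ (Sym2.out_fst_mem _) w hwf

lemma glueAt_mem_fullBehavior (hc : c ∈ Cv v)
    (hyB : ∀ w ≠ v, y w ∈ fullBehavior F G ω S Cv)
    (hcy : ∀ w ≠ v, ∀ (f : G.edgeSet) (hv : v ∈ (f : Sym2 V)), w ∈ (f : Sym2 V) →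
      c.2 ⟨f, hv⟩ = (y w).2 f)
    (hy : ∀ f : G.edgeSet, v ∉ (f : Sym2 V) →
      ∀ a ∈ (f : Sym2 V), ∀ b ∈ (f : Sym2 V), (y a).2 f = (y b).2 f) :
    glueAt G ω S v c y ∈ fullBehavior F G ω S Cv := by
  refine mem_fullBehavior_iff.mpr fun w => ?_
  obtain rfl | hw := eq_or_ne w v
  · rwa [localizeL_glueAt_self]
  · rw [localizeL_glueAt_of_ne hw (hcy w hw) hy]
    exact mem_fullBehavior_iff.mp (hyB w hw) w

lemma mem_map_localizeL_fullBehavior (hT : G.IsTree) (hc : c ∈ Cv v)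
    (hext : ∀ e, c.2 e ∈ (fullBehavior F G ω S Cv).map (projEdge F G S e.1)) :
    c ∈ (fullBehavior F G ω S Cv).map (localizeL F G ω S v) := by
  classical
  choose B hB hBc using fun e => Submodule.mem_map.mp (hext e)
  let y : V → (I → F) × ((e : G.edgeSet) → S e) :=
    fun w => if hw : w = v then 0 else B (hT.firstEdge hw)
  have hy : ∀ w (hw : w ≠ v), y w = B (hT.firstEdge hw) := fun w hw => dif_neg hw
  refine ⟨glueAt G ω S v c y, glueAt_mem_fullBehavior hc ?_ ?_ ?_, localizeL_glueAt_self⟩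
  · intro w hw
    rw [hy w hw]
    exact hB _
  · intro w hw f hv hwf
    rw [hy w hw, hT.firstEdge_eq_of_mem hv hwf hw]
    exact (hBc _).symm
  · intro f hv a ha a' ha'
    rw [hy a (ne_of_mem_of_not_mem ha hv), hy a' (ne_of_mem_of_not_mem ha' hv),
      hT.firstEdge_eq_of_mem_edgeSet f.2 hv ha ha']

end TreeModel

end

theorem essential_local_configs (G : SimpleGraph V) (hT : G.IsTree) (ω : I → V)
    (S : G.edgeSet → Type*) [∀ e, AddCommGroup (S e)] [∀ e, Module F (S e)]
    (Cv : ∀ v : V, Submodule F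
      ((↥(ω ⁻¹' {v}) → F) × ((e : {e : G.edgeSet // v ∈ (e : Sym2 V)}) → S e.val)))
    (hEss : ∀ e : G.edgeSet,
      (fullBehavior F G ω S Cv).map (projEdge F G S e) = ⊤) :
    ∀ v : V, (fullBehavior F G ω S Cv).map (localizeL F G ω S v) = Cv v := fun v =>
  le_antisymm (map_localizeL_fullBehavior_le v) fun _ hc =>
    mem_map_localizeL_fullBehavior hT hc fun e => hEss e.1 ▸ Submodule.mem_top
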